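/- If $W=\{(W_i,\omega_i)\}_{i\in I}$ is a fusion Riesz basis, then the alternate fusion frame operator $L_W = \sum_{i\in I}\omega_i^2\pi_{W_i}S_W^{-1}\pi_{W_i}$ equals $S_{W'} = \sum_{i\in I}\pi_{W_i}$, the fusion frame operator of the 1-uniform family $W'=\{(W_i,1)\}$. -/

import Mathlib

/-!
Let `T` be the synthesis operator `(g_i) ↦ ∑ ω_i g_i`. Its adjoint is `f ↦ (ω_i π_{W_i} f)_i`,
so `T T* = S_W`. For `v ∈ W_i`, the sequences `T* (S_W⁻¹ v)` and `ω_i⁻¹ v` placed at `i` are both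
mapped by `T` to `v`; the lower Riesz bound makes `T` injective, so they agree, and comparing
`i`-th entries gives `ω_i² π_{W_i} S_W⁻¹ v = v`. With `v = π_{W_i} f` this turns the `i`-th term
`ω_i (φ T* f)_i = ω_i² π_{W_i} S_W⁻¹ π_{W_i} f` of `T φ T* f` into `π_{W_i} f`.
-/

open scoped InnerProductSpace
open ContinuousLinearMap (adjoint)
set_option maxHeartbeats 1000000
set_option synthInstance.maxHeartbeats 400000
noncomputable section

variable {H : Type*} [NormedAddCommGroup H] [InnerProductSpace ℂ H] [CompleteSpace H]
variable {ι : Type*} [Countable ι]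

/-- The orthogonal projection onto a closed subspace, as an endomorphism of `H`. -/
noncomputable def projL (W : Submodule ℂ H) [CompleteSpace W] : H →L[ℂ] H :=
  W.subtypeL.comp (Submodule.orthogonalProjectionOnto W)

/-- `{(W i, ω i)}` is a fusion frame with bounds `A ≤ B`. -/
def IsFusionFrame (W : ι → Submodule ℂ H) [∀ i, CompleteSpace (W i)]
    (ω : ι → ℝ) (A B : ℝ) : Prop :=
  ∀ f : H, ∃ s : ℝ,
    HasSum (fun i => (ω i) ^ 2 * ‖(Submodule.orthogonalProjectionOnto (W i) f : H)‖ ^ 2) s ∧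
    A * ‖f‖ ^ 2 ≤ s ∧ s ≤ B * ‖f‖ ^ 2

/-- `{(W i, ω i)}` is a Bessel fusion sequence with bound `B`. -/
def IsBesselFusion (W : ι → Submodule ℂ H) [∀ i, CompleteSpace (W i)]
    (ω : ι → ℝ) (B : ℝ) : Prop :=
  ∀ f : H, ∃ s : ℝ,
    HasSum (fun i => (ω i) ^ 2 * ‖(Submodule.orthogonalProjectionOnto (W i) f : H)‖ ^ 2) s ∧
    s ≤ B * ‖f‖ ^ 2

/-- `{(W i, ω i)}` is a fusion Riesz basis with bounds `C ≤ D`. -/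
def IsFusionRieszBasisWith (W : ι → Submodule ℂ H) (ω : ι → ℝ) (C D : ℝ) : Prop :=
  (⨆ i, W i).topologicalClosure = ⊤ ∧ 0 < C ∧ C ≤ D ∧
  ∀ (J : Finset ι) (g : ∀ i, W i),
    C * ∑ j ∈ J, ‖(g j : H)‖ ^ 2 ≤ ‖∑ j ∈ J, ω j • ((g j : H))‖ ^ 2 ∧
    ‖∑ j ∈ J, ω j • ((g j : H))‖ ^ 2 ≤ D * ∑ j ∈ J, ‖(g j : H)‖ ^ 2

/-- `{(W i, ω i)}` is a fusion Riesz basis. -/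
def IsFusionRieszBasis (W : ι → Submodule ℂ H) (ω : ι → ℝ) : Prop :=
  ∃ C D : ℝ, IsFusionRieszBasisWith W ω C D

section SynthesisOperator

omit [Countable ι]

variable {W : ι → Submodule ℂ H} {ω : ι → ℝ} {TW : lp (fun i => ↥(W i)) 2 →L[ℂ] H}

omit [CompleteSpace H] in
lemma synthesis_single [DecidableEq ι] (hTW : ∀ f, HasSum (fun i => ω i • ((f i : H))) (TW f))
    (i : ι) (v : W i) : TW (lp.single 2 i v) = ω i • (v : H) := by
  refine (hTW _).unique ?_
  convert hasSum_ite_eq i (ω i • (v : H)) using 2 with j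
  rcases eq_or_ne j i with rfl | hj
  · simp
  · simp [hj]

omit [CompleteSpace H] in
lemma mul_sq_norm_le_sq_norm_synthesis {C D : ℝ} (hWω : IsFusionRieszBasisWith W ω C D)
    (hTW : ∀ f, HasSum (fun i => ω i • ((f i : H))) (TW f)) (g : lp (fun i => ↥(W i)) 2) :
    C * ‖g‖ ^ 2 ≤ ‖TW g‖ ^ 2 := by
  have hnorm : HasSum (fun i => ‖(g i : H)‖ ^ 2) (‖g‖ ^ 2) := by
    simpa using lp.hasSum_norm (by norm_num) g
  exact le_of_tendsto_of_tendsto' (hnorm.const_mul C) ((hTW g).norm.pow 2)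
    fun J => (hWω.2.2.2 J g).1

omit [CompleteSpace H] in
lemma synthesis_injective {C D : ℝ} (hWω : IsFusionRieszBasisWith W ω C D)
    (hTW : ∀ f, HasSum (fun i => ω i • ((f i : H))) (TW f)) : Function.Injective TW := by
  refine (injective_iff_map_eq_zero TW).2 fun g hg => ?_
  have hbound := mul_sq_norm_le_sq_norm_synthesis hWω hTW g
  rw [hg, norm_zero, zero_pow two_ne_zero] at hbound
  have hsq : ‖g‖ ^ 2 ≤ 0 := nonpos_of_mul_nonpos_right hbound hWω.2.1
  exact norm_eq_zero.1 (pow_eq_zero_iff two_ne_zero |>.1 (le_antisymm hsq (sq_nonneg _)))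

variable [∀ i, CompleteSpace (W i)]

lemma adjoint_synthesis_apply (hTW : ∀ f, HasSum (fun i => ω i • ((f i : H))) (TW f))
    (f : H) (i : ι) : adjoint TW f i = ω i • Submodule.orthogonalProjectionOnto (W i) f := by
  classical
  refine ext_inner_left ℂ fun v => ?_
  rw [← lp.inner_single_left (𝕜 := ℂ) i v (adjoint TW f),
    ContinuousLinearMap.adjoint_inner_right, synthesis_single hTW,
    RCLike.real_smul_eq_coe_smul (K := ℂ), RCLike.real_smul_eq_coe_smul (K := ℂ),
    inner_smul_real_left, inner_smul_real_right,
    Submodule.inner_orthogonalProjectionOnto_eq_of_mem_left]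

lemma synthesis_adjoint_apply (hTW : ∀ f, HasSum (fun i => ω i • ((f i : H))) (TW f))
    {SW : H →L[ℂ] H}
    (hSW : ∀ f, HasSum (fun i => ω i ^ 2 • (Submodule.orthogonalProjectionOnto (W i) f : H)) (SW f))
    (f : H) : TW (adjoint TW f) = SW f := by
  refine (hTW _).unique ?_
  simpa only [adjoint_synthesis_apply hTW, Submodule.coe_smul_of_tower, smul_smul, ← sq]
    using hSW f

lemma sq_smul_orthogonalProjectionOnto_inverse_apply {C D : ℝ}
    (hWω : IsFusionRieszBasisWith W ω C D)
    (hTW : ∀ f, HasSum (fun i => ω i • ((f i : H))) (TW f)) {SW SWinv : H →L[ℂ] H}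
    (hSW : ∀ f, HasSum (fun i => ω i ^ 2 • (Submodule.orthogonalProjectionOnto (W i) f : H)) (SW f))
    (hinv : SW.comp SWinv = 1) {i : ι} (hωi : ω i ≠ 0) (v : W i) :
    ω i ^ 2 • (Submodule.orthogonalProjectionOnto (W i) (SWinv v) : H) = v := by
  classical
  have hpre : TW (adjoint TW (SWinv v)) = TW (lp.single 2 i ((ω i)⁻¹ • v)) := by
    rw [synthesis_adjoint_apply hTW hSW, ← ContinuousLinearMap.comp_apply, hinv,
      synthesis_single hTW, Submodule.coe_smul_of_tower, smul_smul, mul_inv_cancel₀ hωi,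
      one_smul, one_apply_eq_self]
  have hi := congrArg (fun g => (g i : H)) (synthesis_injective hWω hTW hpre)
  simp only [adjoint_synthesis_apply hTW, lp.single_apply_self, Submodule.coe_smul_of_tower] at hi
  rw [sq, mul_smul, hi, smul_smul, mul_inv_cancel₀ hωi, one_smul]

end SynthesisOperator

/-- for a fusion Riesz basis `W`, the alternate fusion frame operator
`L_W = T_W φ_WW T_W^*` equals `S_{W'} = ∑ᵢ π_{Wᵢ}`, the frame operator of the
1-uniform family. -/
theorem stmt16 (W : ι → Submodule ℂ H) [∀ i, CompleteSpace (W i)]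
    (ω : ι → ℝ) (hω : ∀ i, 0 < ω i)
    (hriesz : IsFusionRieszBasis W ω)
    (TW : lp (fun i => ↥(W i)) 2 →L[ℂ] H)
    (hTW : ∀ f, HasSum (fun i => ω i • ((f i : H))) (TW f))
    (SW SWinv : H →L[ℂ] H)
    (hSW : ∀ f, HasSum (fun i => (ω i) ^ 2 • ((Submodule.orthogonalProjectionOnto (W i) f : H))) (SW f))
    (hSWinv : SW.comp SWinv = 1 ∧ SWinv.comp SW = 1)
    (φ : lp (fun i => ↥(W i)) 2 →L[ℂ] lp (fun i => ↥(W i)) 2)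
    (hφ : ∀ f i, ((φ f) i : H) = (Submodule.orthogonalProjectionOnto (W i) (SWinv ((f i : H))) : H)) :
    ∀ f : H, HasSum (fun i => ((Submodule.orthogonalProjectionOnto (W i) f : H)))
      ((TW ∘L φ ∘L (adjoint TW)) f) := by
  obtain ⟨C, D, hWω⟩ := hriesz
  intro f
  show HasSum _ (TW (φ (adjoint TW f)))
  convert hTW (φ (adjoint TW f)) using 2 with i
  rw [hφ, adjoint_synthesis_apply hTW, Submodule.coe_smul_of_tower,
    ContinuousLinearMap.map_smul_of_tower, ContinuousLinearMap.map_smul_of_tower,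
    Submodule.coe_smul_of_tower, smul_smul, ← sq,
    sq_smul_orthogonalProjectionOnto_inverse_apply hWω hTW hSW hSWinv.1 (hω i).ne']
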